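/- Every nonzero eigenvalue of U is semi-simple: if μ ∈ ℝ, μ ≠ 0 and v ∈ V satisfies (U − μ·id)² v = 0, then (U − μ·id) v = 0. Equivalently, for μ ≠ 0 the generalized eigenspace of U at μ equals the eigenspace of U at μ. -/
import Mathlib


open RealInnerProductSpace

/-- A symmetric positive-semidefinite operator with `⟪C w, w⟫ = 0` kills `w`. -/
lemma psd_inner_zero {V : Type*} [NormedAddCommGroup V] [InnerProductSpace ℝ V]
    (C : V →ₗ[ℝ] V) (hC : C.IsSymmetric) (hCpsd : ∀ v : V, 0 ≤ ⟪C v, v⟫)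
    (w : V) (h : ⟪C w, w⟫ = 0) : C w = 0 := by
  set a : ℝ := ⟪C w, C w⟫ with ha
  have ha0 : 0 ≤ a := real_inner_self_nonneg
  set b : ℝ := ⟪C (C w), C w⟫ with hb
  have hb0 : 0 ≤ b := hCpsd _
  have key : ∀ t : ℝ, 0 ≤ 2 * t * a + t ^ 2 * b := by
    intro t
    have := hCpsd (w + t • C w)
    have expand : ⟪C (w + t • C w), w + t • C w⟫ = 2 * t * a + t ^ 2 * b := by
      have h2 : ⟪C (C w), w⟫ = a := by rw [hC (C w) w]
      simp only [map_add, map_smul, inner_add_left, inner_add_right,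
        real_inner_smul_left, real_inner_smul_right, h, h2, ← ha, ← hb]
      ring
    rw [expand] at this
    exact this
  have hzero : a = 0 := by
    by_contra hne
    have hapos : 0 < a := lt_of_le_of_ne ha0 (Ne.symm hne)
    have hk := key (-a / (b + 1))
    have hb1 : 0 < b + 1 := by linarith
    have heq : 2 * (-a / (b + 1)) * a + (-a / (b + 1)) ^ 2 * b
        = (-(a ^ 2) * (b + 2)) / (b + 1) ^ 2 := by
      field_simp
      ring
    rw [heq] at hk
    have hpos : (0:ℝ) < (b + 1) ^ 2 := by positivity
    have := (div_nonneg_iff.mp hk)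
    rcases this with ⟨hnum, _⟩ | ⟨_, hden⟩
    · nlinarith
    · nlinarith
  have : ⟪C w, C w⟫ = 0 := hzero
  exact inner_self_eq_zero.mp this

/-- Setup as before, with `U := (B + γ • C)⁻¹ ∘ C`.  Every nonzero eigenvalue of `U` is
semi-simple: if `μ ≠ 0` and `(U - μ·id)² v = 0`, then `(U - μ·id) v = 0`. -/
theorem stmt_3 {V : Type*} [NormedAddCommGroup V] [InnerProductSpace ℝ V]
    [FiniteDimensional ℝ V]
    (B C U : V →ₗ[ℝ] V) (hB : B.IsSymmetric) (hC : C.IsSymmetric)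
    (hCpsd : ∀ v : V, 0 ≤ ⟪C v, v⟫) (γ : ℝ)
    (hinv : Function.Bijective ⇑(B + γ • C))
    (hU : (B + γ • C) ∘ₗ U = C)
    (μ : ℝ) (hμ : μ ≠ 0) (v : V)
    (hgen : ((U - μ • (LinearMap.id : V →ₗ[ℝ] V)) ∘ₗ
      (U - μ • (LinearMap.id : V →ₗ[ℝ] V))) v = 0) :
    (U - μ • (LinearMap.id : V →ₗ[ℝ] V)) v = 0 := by
  set A : V →ₗ[ℝ] V := B + γ • C with hAdef
  have hA : A.IsSymmetric := by
    intro x y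
    simp only [hAdef, LinearMap.add_apply, LinearMap.smul_apply, inner_add_left,
      inner_add_right, inner_smul_left, inner_smul_right, hB x y, hC x y]
    simp [RCLike.star_def]
  have hAU : ∀ x : V, A (U x) = C x := fun x => congrFun (congrArg DFunLike.coe hU) x
  set w : V := U v - μ • v with hw
  have hwv : (U - μ • (LinearMap.id : V →ₗ[ℝ] V)) v = w := by
    simp [hw]
  rw [hwv]
  -- From hgen, U w = μ • w
  have hUw : U w = μ • w := by
    have := hgen
    simp only [LinearMap.comp_apply, LinearMap.sub_apply, LinearMap.smul_apply,
      LinearMap.id_apply, map_sub, map_smul, sub_eq_zero] at this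
    rw [hw]
    simpa [map_sub, map_smul, sub_eq_zero] using this
  have hCw : C w = μ • A w := by
    rw [← hAU w, hUw, map_smul]
  have hAw : A w = C v - μ • A v := by
    rw [hw, map_sub, map_smul, hAU]
  -- key scalar identities
  have hsym1 : ⟪A v, U v⟫ = ⟪C v, v⟫ := by
    rw [hA v (U v), hAU, real_inner_comm]
  have hsym2 : ⟪C (U v), v⟫ = ⟪C v, U v⟫ := by
    rw [hC (U v) v, real_inner_comm]
  -- relation from ⟪C w, v⟫ = μ ⟪A w, v⟫
  have hrel : ⟪C v, U v⟫ - μ * ⟪C v, v⟫ = μ * ⟪C v, v⟫ - μ ^ 2 * ⟪A v, v⟫ := by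
    have h1 : ⟪C w, v⟫ = μ * ⟪A w, v⟫ := by rw [hCw, inner_smul_left]; simp
    have h2 : C w = C (U v) - μ • C v := by rw [hw, map_sub, map_smul]
    rw [h2, hAw] at h1
    simp only [inner_sub_left, inner_smul_left, RCLike.star_def, starRingEnd_apply,
      star_trivial] at h1
    rw [hsym2] at h1
    linarith [h1]
  have hAww : ⟪A w, w⟫ = 0 := by
    rw [hAw, hw]
    simp only [inner_sub_left, inner_sub_right, inner_smul_left, inner_smul_right,
      RCLike.star_def, starRingEnd_apply, star_trivial]
    rw [hsym1]
    linarith [hrel]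
  have hCww : ⟪C w, w⟫ = 0 := by
    rw [hCw, inner_smul_left]
    simp [hAww]
  have hCw0 : C w = 0 := psd_inner_zero C hC hCpsd w hCww
  have hAw0 : A w = 0 := by
    have : μ • A w = 0 := by rw [← hCw]; exact hCw0
    simpa [hμ] using smul_eq_zero.mp this
  have : A w = A 0 := by simpa using hAw0
  exact hinv.injective this
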